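/- Unified one-shot converse via Hölder: Let (X,Y) be discrete random variables on countable alphabets, ρ > 0, α = 1/(1+ρ), and 0 ≤ ε < 1. Let ε̃ : 𝒳×𝒴 → [0,1] and κ : 𝒳×𝒴 → (0,∞) be functions, and let K(X,Y) be the random variable equal to κ(X,Y) with probability 1−ε̃(X,Y) and 0 with probability ε̃(X,Y) (conditionally on (X,Y)). Define R(ε̃,κ) = sup_y ∑_{x : ε̃(x,y)<1} 1/κ(x,y). For any fixed y, Hölder's inequality yields E[K(X,Y)^ρ | Y=y] ≥ exp( ρ H_α^{δ(y)}(P_{X|Y=y}) − ρ log ∑_{x: ε̃(x,y)<1} 1/κ(x,y) ), where δ(y) = E[ε̃(X,Y) | Y=y] and H_α^{δ}(·) is the δ-smooth Rényi entropy of order α. -/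

import Mathlib

/-- Feasible values `∑_x Q(x)^α` for sub-distributions `Q ≤ P` with mass `≥ 1 − δ`. -/
def smoothRenyiVals {X : Type*} (α δ : ℝ) (P : X → ℝ) : Set ℝ :=
  {s | ∃ Q : X → ℝ, (∀ x, 0 ≤ Q x ∧ Q x ≤ P x) ∧ 1 - δ ≤ ∑' x, Q x ∧
    Summable (fun x => Q x ^ α) ∧ s = ∑' x, Q x ^ α}

/-- The `δ`-smooth Rényi entropy of order `α` (base 2). -/
noncomputable def smoothRenyi {X : Type*} (α δ : ℝ) (P : X → ℝ) : ℝ :=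
  (1 / (1 - α)) * Real.logb 2 (sInf (smoothRenyiVals α δ P))

/-!
The loss-weighted conditional law `w = (1 - ε̃) P` lies below `P` and has mass `1 - δ`,
so the infimum `I` defining `H_α^δ(P)` is at most `∑ w^α`, and `2^(ρ H_α^δ(P)) = I^(1+ρ)`.
Writing `w^α = a b` with `a = κ^(-ρ/(1+ρ)) 1_{ε̃<1}` and `b = κ^(ρ/(1+ρ)) w^α`, Hölder's
inequality with exponents `(1+ρ)/ρ` and `1+ρ` gives
`(∑ w^α)^(1+ρ) ≤ (∑_{ε̃<1} 1/κ)^ρ ∑ w κ^ρ`, which is the claim.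
-/

open Real

theorem summable_and_tsum_mul_rpow_le_of_holderConjugate {ι : Type*} {p q : ℝ}
    (hpq : p.HolderConjugate q) {f g : ι → ℝ} (hf : ∀ i, 0 ≤ f i) (hg : ∀ i, 0 ≤ g i)
    (hf_sum : Summable fun i => f i ^ p) (hg_sum : Summable fun i => g i ^ q) :
    Summable (fun i => f i * g i) ∧
      (∑' i, f i * g i) ^ q ≤ (∑' i, f i ^ p) ^ (q - 1) * ∑' i, g i ^ q := by
  obtain ⟨hsum, hle⟩ := summable_and_inner_le_Lp_mul_Lq_tsum_of_nonneg hpq hf hg hf_sum hg_sum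
  have hA : 0 ≤ ∑' i, f i ^ p := tsum_nonneg fun i => rpow_nonneg (hf i) p
  have hB : 0 ≤ ∑' i, g i ^ q := tsum_nonneg fun i => rpow_nonneg (hg i) q
  refine ⟨hsum, (rpow_le_rpow (tsum_nonneg fun i => mul_nonneg (hf i) (hg i)) hle
    hpq.symm.nonneg).trans_eq ?_⟩
  rw [mul_rpow (rpow_nonneg hA _) (rpow_nonneg hB _), ← rpow_mul hA, ← rpow_mul hB,
    one_div_mul_eq_div, hpq.symm.div_conj_eq_sub_one, one_div_mul_cancel hpq.symm.ne_zero,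
    rpow_one]

theorem summable_and_tsum_rpow_one_div_one_add_rpow_le {X : Type*} {ρ : ℝ} (hρ : 0 < ρ)
    (s : X → Prop) [DecidablePred s] {κ w : X → ℝ} (hκ : ∀ x, 0 < κ x) (hw : ∀ x, 0 ≤ w x)
    (hws : ∀ x, ¬ s x → w x = 0)
    (hS : Summable fun x => if s x then 1 / κ x else 0)
    (hT : Summable fun x => w x * κ x ^ ρ) :
    Summable (fun x => w x ^ (1 / (1 + ρ))) ∧
      (∑' x, w x ^ (1 / (1 + ρ))) ^ (1 + ρ) ≤
        (∑' x, if s x then 1 / κ x else 0) ^ ρ * ∑' x, w x * κ x ^ ρ := by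
  have hpq : ((1 + ρ) / ρ).HolderConjugate (1 + ρ) :=
    holderConjugate_iff.mpr ⟨by rw [lt_div_iff₀ hρ]; linarith, by field_simp; ring⟩
  let a : X → ℝ := fun x => if s x then κ x ^ (-(ρ / (1 + ρ))) else 0
  let b : X → ℝ := fun x => κ x ^ (ρ / (1 + ρ)) * w x ^ (1 / (1 + ρ))
  have ha₀ : ∀ x, 0 ≤ a x := fun x => by
    dsimp only [a]; split_ifs
    exacts [rpow_nonneg (hκ x).le _, le_rfl]
  have hb₀ : ∀ x, 0 ≤ b x := fun x =>
    mul_nonneg (rpow_nonneg (hκ x).le _) (rpow_nonneg (hw x) _)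
  have hab : ∀ x, a x * b x = w x ^ (1 / (1 + ρ)) := fun x => by
    by_cases hx : s x
    · simp only [a, b, if_pos hx, ← mul_assoc, ← rpow_add (hκ x), neg_add_cancel, rpow_zero,
        one_mul]
    · simp only [a, b, if_neg hx, hws x hx, zero_mul,
        zero_rpow (by positivity : 1 / (1 + ρ) ≠ 0)]
  have ha : ∀ x, a x ^ ((1 + ρ) / ρ) = if s x then 1 / κ x else 0 := fun x => by
    by_cases hx : s x
    · simp only [a, if_pos hx]
      rw [← rpow_mul (hκ x).le, show -(ρ / (1 + ρ)) * ((1 + ρ) / ρ) = -1 by field_simp,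
        rpow_neg_one, one_div]
    · simp only [a, if_neg hx]
      exact zero_rpow (by positivity)
  have hb : ∀ x, b x ^ (1 + ρ) = w x * κ x ^ ρ := fun x => by
    rw [mul_rpow (rpow_nonneg (hκ x).le _) (rpow_nonneg (hw x) _), ← rpow_mul (hκ x).le,
      ← rpow_mul (hw x), show ρ / (1 + ρ) * (1 + ρ) = ρ by field_simp,
      show 1 / (1 + ρ) * (1 + ρ) = 1 by field_simp, rpow_one, mul_comm]
  have := summable_and_tsum_mul_rpow_le_of_holderConjugate hpq ha₀ hb₀
    (by simpa only [ha] using hS) (by simpa only [hb] using hT)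
  simpa only [hab, ha, hb, add_sub_cancel_left] using this

section SmoothRenyi

variable {X : Type*} {α δ : ℝ} {P : X → ℝ}

theorem bddBelow_smoothRenyiVals : BddBelow (smoothRenyiVals α δ P) :=
  ⟨0, by
    rintro _ ⟨Q, hQ, -, -, rfl⟩
    exact tsum_nonneg fun x => rpow_nonneg (hQ x).1 _⟩

/-- Every feasible `Q` has `Q x ≤ 1`, hence `Q x ≤ Q x ^ α`. -/
theorem one_sub_le_sInf_smoothRenyiVals (hα : α ≤ 1) (hP₀ : ∀ x, 0 ≤ P x) (hP : HasSum P 1)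
    (hne : (smoothRenyiVals α δ P).Nonempty) : 1 - δ ≤ sInf (smoothRenyiVals α δ P) := by
  refine le_csInf hne ?_
  rintro _ ⟨Q, hQ, hmass, hQα, rfl⟩
  have hQ_le_rpow : ∀ x, Q x ≤ Q x ^ α := fun x =>
    self_le_rpow_of_le_one (hQ x).1 ((hQ x).2.trans (le_hasSum hP x fun j _ => hP₀ j)) hα
  have hQ_sum : Summable Q := hP.summable.of_nonneg_of_le (fun x => (hQ x).1) fun x => (hQ x).2
  exact hmass.trans (hQ_sum.tsum_le_tsum hQ_le_rpow hQα)

theorem tsum_one_sub_mul_rpow_mem_smoothRenyiVals {ε : X → ℝ} (hP₀ : ∀ x, 0 ≤ P x)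
    (hP : HasSum P 1) (hε : ∀ x, 0 ≤ ε x ∧ ε x ≤ 1)
    (hα : Summable fun x => ((1 - ε x) * P x) ^ α) :
    ∑' x, ((1 - ε x) * P x) ^ α ∈ smoothRenyiVals α (∑' x, P x * ε x) P := by
  have hPε : Summable fun x => P x * ε x := hP.summable.of_nonneg_of_le
    (fun x => mul_nonneg (hP₀ x) (hε x).1) fun x => mul_le_of_le_one_right (hP₀ x) (hε x).2
  refine ⟨fun x => (1 - ε x) * P x, fun x => ⟨mul_nonneg (sub_nonneg.2 (hε x).2) (hP₀ x),
    mul_le_of_le_one_left (hP₀ x) (by linarith [(hε x).1])⟩, le_of_eq ?_, hα, rfl⟩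
  simp only [sub_mul, one_mul, mul_comm (ε _)]
  rw [hP.summable.tsum_sub hPε, hP.tsum_eq]

theorem two_rpow_mul_smoothRenyi {ρ : ℝ} (hρ : 0 < ρ)
    (hI : 0 < sInf (smoothRenyiVals (1 / (1 + ρ)) δ P)) :
    (2 : ℝ) ^ (ρ * smoothRenyi (1 / (1 + ρ)) δ P) =
      sInf (smoothRenyiVals (1 / (1 + ρ)) δ P) ^ (1 + ρ) := by
  rw [smoothRenyi, ← mul_assoc, show ρ * (1 / (1 - 1 / (1 + ρ))) = 1 + ρ by
    rw [one_sub_div (by positivity), add_sub_cancel_left]; field_simp, mul_comm,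
    rpow_mul zero_le_two, rpow_logb two_pos one_lt_two.ne' hI]

theorem two_rpow_mul_smoothRenyi_sub_le {ρ S T : ℝ} (hρ : 0 < ρ)
    (hI : 0 < sInf (smoothRenyiVals (1 / (1 + ρ)) δ P)) (hS : 0 ≤ S)
    (h : sInf (smoothRenyiVals (1 / (1 + ρ)) δ P) ^ (1 + ρ) ≤ S ^ ρ * T) :
    (2 : ℝ) ^ (ρ * smoothRenyi (1 / (1 + ρ)) δ P - ρ * logb 2 S) ≤ T := by
  have hS_pos : 0 < S := hS.lt_of_ne fun hS₀ => by
    rw [← hS₀, zero_rpow hρ.ne', zero_mul] at h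
    exact (rpow_pos_of_pos hI _).not_ge h
  rw [rpow_sub two_pos, two_rpow_mul_smoothRenyi hρ hI, mul_comm ρ, rpow_mul zero_le_two,
    rpow_logb two_pos one_lt_two.ne' hS_pos, div_le_iff₀ (rpow_pos_of_pos hS_pos ρ), mul_comm]
  exact h

end SmoothRenyi

theorem hasSum_div_of_eq_tsum {X : Type*} {f : X → ℝ} {c : ℝ} (hc : c = ∑' x, f x)
    (hc₀ : c ≠ 0) : HasSum (fun x => f x / c) 1 := by
  have hf : Summable f := by
    by_contra h
    exact hc₀ (hc.trans (tsum_eq_zero_of_not_summable h))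
  simpa [div_self hc₀, ← hc] using hf.hasSum.div_const c

theorem unified_one_shot_converse_general {X Y : Type*}
    (p : X → Y → ℝ) (pY : Y → ℝ) (ρ : ℝ) (hρ : 0 < ρ)
    (εt κ : X → Y → ℝ)
    (hp : ∀ x y, 0 ≤ p x y) (hpY : ∀ y, pY y = ∑' x, p x y)
    (hpYpos : ∀ y, 0 < pY y)
    (hεt : ∀ x y, 0 ≤ εt x y ∧ εt x y ≤ 1)
    (hκ : ∀ x y, 0 < κ x y)
    (y : Y) (δy : ℝ)
    (hδy : δy = ∑' x, (p x y / pY y) * εt x y) (hδy1 : δy < 1)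
    (hS : Summable fun x => if εt x y < 1 then 1 / κ x y else 0)
    (hK : Summable fun x => (1 - εt x y) * (p x y / pY y) * κ x y ^ ρ) :
    (2 : ℝ) ^ (ρ * smoothRenyi (1 / (1 + ρ)) δy (fun x => p x y / pY y)
        - ρ * Real.logb 2 (∑' x, if εt x y < 1 then 1 / κ x y else 0)) ≤
      ∑' x, (1 - εt x y) * (p x y / pY y) * κ x y ^ ρ := by
  subst hδy
  have hP₀ : ∀ x, 0 ≤ p x y / pY y := fun x => div_nonneg (hp x y) (hpYpos y).le
  have hP : HasSum (fun x => p x y / pY y) 1 := hasSum_div_of_eq_tsum (hpY y) (hpYpos y).ne'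
  obtain ⟨hwα, hHolder⟩ := summable_and_tsum_rpow_one_div_one_add_rpow_le hρ
    (fun x => εt x y < 1) (fun x => hκ x y)
    (fun x => mul_nonneg (sub_nonneg.2 (hεt x y).2) (hP₀ x))
    (fun x hx => by rw [le_antisymm (hεt x y).2 (not_lt.1 hx), sub_self, zero_mul]) hS hK
  have hmem := tsum_one_sub_mul_rpow_mem_smoothRenyiVals hP₀ hP (fun x => hεt x y) hwα
  have hI_pos := (sub_pos.2 hδy1).trans_le (one_sub_le_sInf_smoothRenyiVals
    (div_le_one_of_le₀ (by linarith) (by linarith)) hP₀ hP ⟨_, hmem⟩)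
  refine two_rpow_mul_smoothRenyi_sub_le hρ hI_pos (tsum_nonneg fun x => ?_) ?_
  · split_ifs
    exacts [one_div_nonneg.2 (hκ x y).le, le_rfl]
  · exact (rpow_le_rpow hI_pos.le (csInf_le bddBelow_smoothRenyiVals hmem) (by linarith)).trans
      hHolder

/-- Unified one-shot converse via Hölder's inequality: for a fixed `y`, with
`α = 1/(1+ρ)` and `δ(y) = E[ε̃(X,Y) | Y = y]`,
`E[K(X,Y)^ρ | Y=y] ≥ 2^( ρ H_α^{δ(y)}(P_{X|Y=y}) − ρ log₂ ∑_{x : ε̃(x,y)<1} 1/κ(x,y) )`,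
where `E[K(X,Y)^ρ | Y=y] = ∑_x (1−ε̃(x,y)) P_{X|Y}(x|y) κ(x,y)^ρ`. -/
theorem unified_one_shot_converse {X Y : Type*} [Countable X] [Countable Y]
    (p : X → Y → ℝ) (pY : Y → ℝ) (ρ : ℝ) (hρ : 0 < ρ)
    (εt κ : X → Y → ℝ)
    (hp : ∀ x y, 0 ≤ p x y) (hpY : ∀ y, pY y = ∑' x, p x y)
    (hpYpos : ∀ y, 0 < pY y) (hsum : ∑' y, pY y = 1)
    (hεt : ∀ x y, 0 ≤ εt x y ∧ εt x y ≤ 1)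
    (hκ : ∀ x y, 0 < κ x y)
    (y : Y) (δy : ℝ)
    (hδy : δy = ∑' x, (p x y / pY y) * εt x y) (hδy1 : δy < 1)
    (hS : Summable fun x => if εt x y < 1 then 1 / κ x y else 0)
    (hK : Summable fun x => (1 - εt x y) * (p x y / pY y) * κ x y ^ ρ)
    (hL : Summable fun x => ((1 - εt x y) * (p x y / pY y)) ^ (1 / (1 + ρ))) :
    (2 : ℝ) ^ (ρ * smoothRenyi (1 / (1 + ρ)) δy (fun x => p x y / pY y)
        - ρ * Real.logb 2 (∑' x, if εt x y < 1 then 1 / κ x y else 0)) ≤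
      ∑' x, (1 - εt x y) * (p x y / pY y) * κ x y ^ ρ :=
  unified_one_shot_converse_general p pY ρ hρ εt κ hp hpY hpYpos hεt hκ y δy hδy hδy1 hS hK
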